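/- arXiv:1603.09388 — 5 statements merged into one kernel-verified Lean document; each statement's English description precedes it below -/
import Mathlib

section
/- Let D be the incidence matrix of a graph G = (V,E) with maximal vertex degree d, and let T ⊆ E be nonempty. Then for every θ ∈ ℝⁿ one has ‖(Dθ)_T‖₁ ≤ 2·√|T|·min(√d, √|T|)·‖θ‖₂; equivalently, the compatibility factor satisfies κ_T(D) ≥ 1/(2·min(√d, √|T|)). -/
open MeasureTheory ProbabilityTheory Matrix

noncomputable section

/-- Euclidean norm of a finitely indexed real vector. -/
def norm2 {V : Type*} [Fintype V] (θ : V → ℝ) : ℝ := Real.sqrt (∑ i, θ i ^ 2)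

/-- Euclidean norm of the `j`-th column of `S`. -/
def colNorm {V E : Type*} [Fintype V] (S : Matrix V E ℝ) (j : E) : ℝ :=
  Real.sqrt (∑ i, S i j ^ 2)

/-- `D` is an (oriented) edge–vertex incidence matrix of the simple graph `G`:
each row has a `1` and a `-1` at the endpoints of an edge of `G` and `0` elsewhere,
and each edge of `G` corresponds to exactly one row. -/
def IsIncidence {V E : Type*} (G : SimpleGraph V) (D : Matrix E V ℝ) : Prop :=
  (∀ e : E, ∃ i j : V, G.Adj i j ∧ D e i = 1 ∧ D e j = -1 ∧
      ∀ k : V, k ≠ i → k ≠ j → D e k = 0) ∧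
  (∀ i j : V, G.Adj i j →
      ∃! e : E, (D e i = 1 ∧ D e j = -1) ∨ (D e i = -1 ∧ D e j = 1))

/-- `S` is the Moore–Penrose pseudoinverse of `D`. -/
def IsMoorePenrose {E V : Type*} [Fintype V] [Fintype E]
    (D : Matrix E V ℝ) (S : Matrix V E ℝ) : Prop :=
  D * S * D = D ∧ S * D * S = S ∧ (D * S)ᵀ = D * S ∧ (S * D)ᵀ = S * D

/-- Inverse scaling factor: maximal column norm of the pseudoinverse `S` of `D`. -/
def invScaling {V E : Type*} [Fintype V] (S : Matrix V E ℝ) : ℝ := ⨆ j : E, colNorm S j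

/-- Compatibility factor `κ_T(D)`. -/
def compat {V E : Type*} [Fintype V] [Fintype E] [DecidableEq E]
    (D : Matrix E V ℝ) (T : Finset E) : ℝ :=
  if T = ∅ then 1
  else sInf {r : ℝ | ∃ θ : V → ℝ, (∑ e ∈ T, |D.mulVec θ e|) ≠ 0 ∧
    r = Real.sqrt T.card * norm2 θ / ∑ e ∈ T, |D.mulVec θ e|}

/-- `θhat` is a TV denoiser with data `y` and regularization `lam`,
i.e. a minimizer of the TV-penalized least squares criterion. -/
def IsTVDenoiser {V E : Type*} [Fintype V] [Fintype E]
    (D : Matrix E V ℝ) (lam : ℝ) (y θhat : V → ℝ) : Prop :=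
  ∀ θ : V → ℝ,
    (1 / (Fintype.card V : ℝ)) * ∑ i, (θhat i - y i) ^ 2 + lam * ∑ e, |D.mulVec θhat e|
      ≤ (1 / (Fintype.card V : ℝ)) * ∑ i, (θ i - y i) ^ 2 + lam * ∑ e, |D.mulVec θ e|

/-- The law of the noise vector `ε`: independent centered Gaussian coordinates
with variance `σ²`. -/
def noise (V : Type*) [Fintype V] (σ : ℝ) : Measure (V → ℝ) :=
  Measure.pi fun _ => gaussianReal 0 (σ ^ 2).toNNReal

/-- Number of nonzero coordinates. -/
def supp0 {E : Type*} [Fintype E] (x : E → ℝ) : ℕ :=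
  (Finset.univ.filter fun e => x e ≠ 0).card

/-- The N×N two-dimensional grid graph. -/
def gridGraph2 (N : ℕ) : SimpleGraph (Fin N × Fin N) :=
  SimpleGraph.fromRel fun a b =>
    (a.1 = b.1 ∧ (a.2 : ℕ) + 1 = (b.2 : ℕ)) ∨ (a.2 = b.2 ∧ (a.1 : ℕ) + 1 = (b.1 : ℕ))

/-- The d-dimensional N×⋯×N grid graph. -/
def gridGraphD (d N : ℕ) : SimpleGraph (Fin d → Fin N) :=
  SimpleGraph.fromRel fun a b =>
    ∃ j : Fin d, ((a j : ℕ) + 1 = (b j : ℕ)) ∧ ∀ k : Fin d, k ≠ j → a k = b k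

/-- The d-dimensional hypercube graph. -/
def cubeGraph (d : ℕ) : SimpleGraph (Fin d → Bool) :=
  SimpleGraph.fromRel fun a b =>
    ∃ j : Fin d, a j ≠ b j ∧ ∀ k : Fin d, k ≠ j → a k = b k

/-- The k-th power of the cycle graph on n vertices. -/
def cyclePowerGraph (n k : ℕ) : SimpleGraph (Fin n) :=
  SimpleGraph.fromRel fun a b =>
    ∃ l : ℕ, 1 ≤ l ∧ l ≤ k ∧ (b : ℕ) = ((a : ℕ) + l) % n

/-- Lemma 2.3: for a graph with maximal degree `d` and a
nonempty edge set `T`, `‖(Dθ)_T‖₁ ≤ 2·√|T|·min(√d, √|T|)·‖θ‖₂` for all `θ`;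
equivalently `κ_T(D) ≥ 1/(2·min(√d, √|T|))`. -/
theorem compatibility_factor_bound {n m : ℕ}
    (G : SimpleGraph (Fin n)) (d : ℕ)
    (hd : ∀ v : Fin n, Set.ncard {u | G.Adj v u} ≤ d)
    (D : Matrix (Fin m) (Fin n) ℝ) (hD : IsIncidence G D)
    (T : Finset (Fin m)) (hT : T.Nonempty) :
    (∀ θ : Fin n → ℝ,
        ∑ e ∈ T, |D.mulVec θ e| ≤
          2 * Real.sqrt T.card * min (Real.sqrt d) (Real.sqrt T.card) * norm2 θ) ∧
    1 / (2 * min (Real.sqrt d) (Real.sqrt T.card)) ≤ compat D T := by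
  classical
  set M : ℝ := min (Real.sqrt d) (Real.sqrt T.card) with hM
  set w : Fin n → ℝ := fun k => ∑ e ∈ T, |D e k| with hwdef
  have sqrtmono : Monotone Real.sqrt := fun a b h => Real.sqrt_le_sqrt h
  -- entries of D are 0 or ±1
  have hDabs : ∀ e k, |D e k| = 0 ∨ |D e k| = 1 := by
    intro e k
    obtain ⟨i, j, hij, h1, h2, h0⟩ := hD.1 e
    by_cases hki : k = i
    · right; rw [hki, h1]; norm_num
    by_cases hkj : k = j
    · right; rw [hkj, h2]; norm_num
    · left; rw [h0 k hki hkj]; norm_num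
  have hwnn : ∀ k, 0 ≤ w k := fun k => Finset.sum_nonneg fun e _ => abs_nonneg _
  have hwT : ∀ k, w k ≤ (T.card : ℝ) := by
    intro k
    calc w k ≤ ∑ _e ∈ T, (1 : ℝ) := by
          refine Finset.sum_le_sum fun e _ => ?_
          rcases hDabs e k with h | h <;> rw [h] <;> norm_num
      _ = (T.card : ℝ) := by simp
  -- the other-endpoint existence lemma
  have hother : ∀ (e : Fin m) (k : Fin n), D e k ≠ 0 →
      ∃ u, G.Adj k u ∧ ((D e k = 1 ∧ D e u = -1) ∨ (D e k = -1 ∧ D e u = 1)) := by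
    intro e k hk
    obtain ⟨i, j, hij, h1, h2, h0⟩ := hD.1 e
    by_cases hki : k = i
    · exact ⟨j, by rw [hki]; exact hij, Or.inl ⟨by rw [hki, h1], h2⟩⟩
    by_cases hkj : k = j
    · exact ⟨i, by rw [hkj]; exact hij.symm, Or.inr ⟨by rw [hkj, h2], h1⟩⟩
    · exact absurd (h0 k hki hkj) hk
  -- degree bound: w k ≤ d
  have hwd : ∀ k, w k ≤ (d : ℝ) := by
    intro k
    set S : Finset (Fin m) := T.filter fun e => D e k ≠ 0 with hS
    have hwcard : w k = (S.card : ℝ) := by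
      have h1 : w k = ∑ e ∈ S, |D e k| := by
        rw [hwdef]
        refine (Finset.sum_subset (Finset.filter_subset _ _) ?_).symm
        intro e _ he
        have : ¬ D e k ≠ 0 := by
          intro h
          exact he (Finset.mem_filter.2 ⟨by assumption, h⟩)
        simp [not_not.1 this]
      rw [h1]
      rw [Finset.sum_congr rfl (fun e he => ?_), Finset.sum_const, nsmul_eq_mul, mul_one]
      have hek : D e k ≠ 0 := (Finset.mem_filter.1 he).2
      rcases hDabs e k with h | h
      · exact absurd (abs_eq_zero.1 h) hek
      · exact h
    rw [hwcard]
    have hcard : S.card ≤ d := by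
      have hinj : S.card ≤ (Finset.univ.filter fun u => G.Adj k u).card := by
        refine Finset.card_le_card_of_injOn
          (fun e => if h : D e k ≠ 0 then Classical.choose (hother e k h) else k) ?_ ?_
        · intro e he
          have h : D e k ≠ 0 := (Finset.mem_filter.1 he).2
          simp only [dif_pos h]
          exact Finset.mem_filter.2 ⟨Finset.mem_univ _,
            (Classical.choose_spec (hother e k h)).1⟩
        · intro e he e' he' heq
          have h : D e k ≠ 0 := (Finset.mem_filter.1 he).2
          have h' : D e' k ≠ 0 := (Finset.mem_filter.1 he').2
          simp only [dif_pos h, dif_pos h'] at heq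
          obtain ⟨hadj, hpat⟩ := Classical.choose_spec (hother e k h)
          obtain ⟨hadj', hpat'⟩ := Classical.choose_spec (hother e' k h')
          rw [heq] at hpat
          obtain ⟨e'', _, huniq⟩ := hD.2 k _ hadj'
          rw [huniq e hpat, huniq e' hpat']
      refine hinj.trans ?_
      have : {u | G.Adj k u}.ncard = (Finset.univ.filter fun u => G.Adj k u).card := by
        rw [Set.ncard_eq_toFinset_card']
        congr 1
        ext u
        simp
      rw [← this]
      exact hd k
    exact_mod_cast hcard
  -- total weight
  have hsumw : ∑ k, w k = 2 * (T.card : ℝ) := by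
    rw [hwdef, Finset.sum_comm]
    have : ∀ e ∈ T, ∑ k, |D e k| = (2 : ℝ) := by
      intro e _
      obtain ⟨i, j, hij, h1, h2, h0⟩ := hD.1 e
      have hne : i ≠ j := G.ne_of_adj hij
      have : ∑ k ∈ ({i, j} : Finset (Fin n)), |D e k| = ∑ k, |D e k| := by
        refine Finset.sum_subset (Finset.subset_univ _) ?_
        intro x _ hx
        simp only [Finset.mem_insert, Finset.mem_singleton, not_or] at hx
        rw [h0 x hx.1 hx.2]; norm_num
      rw [← this, Finset.sum_pair hne, h1, h2]
      norm_num
    rw [Finset.sum_congr rfl this, Finset.sum_const, nsmul_eq_mul]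
    ring
  -- M as a sqrt of a min, and positivity facts
  have hMnn : 0 ≤ M := le_min (Real.sqrt_nonneg _) (Real.sqrt_nonneg _)
  have hMeq : M = Real.sqrt (min (d : ℝ) (T.card : ℝ)) := (sqrtmono.map_min).symm
  have hminnn : (0 : ℝ) ≤ min (d : ℝ) (T.card : ℝ) :=
    le_min (Nat.cast_nonneg _) (Nat.cast_nonneg _)
  -- the main inequality
  have key : ∀ θ : Fin n → ℝ,
      ∑ e ∈ T, |D.mulVec θ e| ≤ 2 * Real.sqrt T.card * M * norm2 θ := by
    intro θ
    have step1 : ∑ e ∈ T, |D.mulVec θ e| ≤ ∑ k, w k * |θ k| := by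
      have h1 : ∀ e ∈ T, |D.mulVec θ e| ≤ ∑ k, |D e k| * |θ k| := by
        intro e _
        calc |D.mulVec θ e| = |∑ k, D e k * θ k| := by
              simp [Matrix.mulVec, dotProduct]
          _ ≤ ∑ k, |D e k * θ k| := Finset.abs_sum_le_sum_abs _ _
          _ = ∑ k, |D e k| * |θ k| := by simp [abs_mul]
      calc ∑ e ∈ T, |D.mulVec θ e| ≤ ∑ e ∈ T, ∑ k, |D e k| * |θ k| :=
            Finset.sum_le_sum h1
        _ = ∑ k, ∑ e ∈ T, |D e k| * |θ k| := Finset.sum_comm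
        _ = ∑ k, w k * |θ k| := by
            refine Finset.sum_congr rfl fun k _ => ?_
            rw [hwdef, Finset.sum_mul]
    have step2 : ∑ k, w k * |θ k| ≤
        Real.sqrt (∑ k, w k ^ 2) * norm2 θ := by
      have := Real.sum_mul_le_sqrt_mul_sqrt Finset.univ w (fun k => |θ k|)
      have habs : ∑ k, |θ k| ^ 2 = ∑ k, θ k ^ 2 := by simp [sq_abs]
      rw [habs] at this
      exact this
    have step3 : ∑ k, w k ^ 2 ≤ 2 * min (d : ℝ) (T.card : ℝ) * (T.card : ℝ) := by
      calc ∑ k, w k ^ 2 ≤ ∑ k, min (d : ℝ) (T.card : ℝ) * w k := by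
            refine Finset.sum_le_sum fun k _ => ?_
            rw [sq]
            exact mul_le_mul_of_nonneg_right (le_min (hwd k) (hwT k)) (hwnn k)
        _ = min (d : ℝ) (T.card : ℝ) * ∑ k, w k := by rw [Finset.mul_sum]
        _ = 2 * min (d : ℝ) (T.card : ℝ) * (T.card : ℝ) := by rw [hsumw]; ring
    have step4 : Real.sqrt (∑ k, w k ^ 2) ≤ 2 * Real.sqrt T.card * M := by
      calc Real.sqrt (∑ k, w k ^ 2)
          ≤ Real.sqrt (2 * min (d : ℝ) (T.card : ℝ) * (T.card : ℝ)) :=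
            Real.sqrt_le_sqrt step3
        _ = Real.sqrt 2 * (Real.sqrt (min (d : ℝ) (T.card : ℝ)) * Real.sqrt T.card) := by
            rw [Real.sqrt_mul (by positivity), Real.sqrt_mul (by norm_num)]; ring
        _ ≤ 2 * (Real.sqrt (min (d : ℝ) (T.card : ℝ)) * Real.sqrt T.card) := by
            refine mul_le_mul_of_nonneg_right ?_ (by positivity)
            nlinarith [Real.sq_sqrt (by norm_num : (0:ℝ) ≤ 2), Real.sqrt_nonneg 2]
        _ = 2 * Real.sqrt T.card * M := by rw [hMeq]; ring
    have hn2 : 0 ≤ norm2 θ := Real.sqrt_nonneg _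
    calc ∑ e ∈ T, |D.mulVec θ e| ≤ Real.sqrt (∑ k, w k ^ 2) * norm2 θ :=
          step1.trans step2
      _ ≤ 2 * Real.sqrt T.card * M * norm2 θ :=
          mul_le_mul_of_nonneg_right step4 hn2
  refine ⟨key, ?_⟩
  -- positivity of M
  obtain ⟨e0, he0⟩ := hT
  obtain ⟨i0, j0, hij0, h10, h20, h00⟩ := hD.1 e0
  have hd1 : 1 ≤ d := by
    have hfin : {u | G.Adj i0 u}.Finite := Set.toFinite _
    have hpos : 0 < {u | G.Adj i0 u}.ncard :=
      (Set.ncard_pos hfin).2 ⟨j0, hij0⟩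
    exact hpos.trans_le (hd i0)
  have hTpos : (0 : ℝ) < (T.card : ℝ) := by
    have : 0 < T.card := Finset.card_pos.2 ⟨e0, he0⟩
    exact_mod_cast this
  have hMpos : 0 < M := by
    apply lt_min
    · exact Real.sqrt_pos.2 (by exact_mod_cast Nat.lt_of_lt_of_le Nat.zero_lt_one hd1)
    · exact Real.sqrt_pos.2 hTpos
  have hTne : T ≠ ∅ := Finset.nonempty_iff_ne_empty.1 ⟨e0, he0⟩
  simp only [compat, if_neg hTne]
  -- nonemptiness of the set
  set θ0 : Fin n → ℝ := fun k => if k = i0 then 1 else 0 with hθ0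
  have hmv : D.mulVec θ0 e0 = 1 := by
    simp only [Matrix.mulVec, dotProduct, hθ0]
    rw [Finset.sum_eq_single i0]
    · simp [h10]
    · intro b _ hb; simp [hb]
    · intro h; exact absurd (Finset.mem_univ i0) h
  have hsne : (∑ e ∈ T, |D.mulVec θ0 e|) ≠ 0 := by
    have : (1 : ℝ) ≤ ∑ e ∈ T, |D.mulVec θ0 e| := by
      calc (1 : ℝ) = |D.mulVec θ0 e0| := by rw [hmv]; norm_num
        _ ≤ ∑ e ∈ T, |D.mulVec θ0 e| :=
          Finset.single_le_sum (f := fun e => |D.mulVec θ0 e|)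
            (fun e _ => abs_nonneg _) he0
    linarith
  refine le_csInf ⟨_, θ0, hsne, rfl⟩ ?_
  rintro r ⟨θ, hne, rfl⟩
  have hsnn : (0 : ℝ) ≤ ∑ e ∈ T, |D.mulVec θ e| :=
    Finset.sum_nonneg fun e _ => abs_nonneg _
  have hspos : (0 : ℝ) < ∑ e ∈ T, |D.mulVec θ e| := lt_of_le_of_ne hsnn (Ne.symm hne)
  rw [div_le_div_iff₀ (by positivity) hspos, one_mul]
  calc ∑ e ∈ T, |D.mulVec θ e| ≤ 2 * Real.sqrt T.card * M * norm2 θ := key θ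
    _ = Real.sqrt T.card * norm2 θ * (2 * M) := by ring
end
end

section
/- For every integer d ≥ 1, the incidence matrix D_□ of the d-dimensional hypercube graph on n = 2^d vertices has inverse scaling factor ρ(D_□) ≤ 1; that is, every column s of the Moore–Penrose pseudoinverse D_□† satisfies ‖s‖₂ ≤ 1. -/
open MeasureTheory ProbabilityTheory Matrix

noncomputable section

namespace HCAux

variable {V : Type*} [Fintype V]

def Var (x : V → ℝ) : ℝ := (Fintype.card V : ℝ) * ∑ v, x v ^ 2 - (∑ v, x v) ^ 2

lemma two_Var (x : V → ℝ) : ∑ v, ∑ w, (x v - x w) ^ 2 = 2 * Var x := by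
  have h1 : ∀ v : V, ∑ w, (x v - x w) ^ 2
      = (Fintype.card V : ℝ) * x v ^ 2 - 2 * x v * (∑ w, x w) + ∑ w, x w ^ 2 := by
    intro v
    have h0 : ∀ w : V, (x v - x w) ^ 2 = x v ^ 2 - 2 * x v * x w + x w ^ 2 := by
      intro w; ring
    rw [Finset.sum_congr rfl fun w _ => h0 w]
    simp [Finset.sum_add_distrib, Finset.sum_sub_distrib, Finset.mul_sum, Finset.card_univ]
  rw [Finset.sum_congr rfl fun v _ => h1 v]
  have h2 : ∑ v : V, 2 * x v * (∑ w, x w) = 2 * (∑ v, x v) ^ 2 := by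
    have : ∀ v : V, 2 * x v * (∑ w, x w) = x v * (2 * ∑ w, x w) := fun v => by ring
    rw [Finset.sum_congr rfl fun v _ => this v, ← Finset.sum_mul]; ring
  simp only [Finset.sum_add_distrib, Finset.sum_sub_distrib, Finset.sum_const,
    Finset.card_univ, nsmul_eq_mul, Var, ← Finset.mul_sum]
  rw [h2]; ring

lemma Var_sum_le {ι : Type*} (s : Finset ι) (x : ι → V → ℝ) :
    Var (fun v => ∑ a ∈ s, x a v) ≤ (s.card : ℝ) * ∑ a ∈ s, Var (x a) := by
  have h2 : (2:ℝ) * Var (fun v => ∑ a ∈ s, x a v)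
      ≤ 2 * ((s.card : ℝ) * ∑ a ∈ s, Var (x a)) := by
    rw [← two_Var]
    have hpt : ∀ v w : V,
        ((∑ a ∈ s, x a v) - ∑ a ∈ s, x a w) ^ 2
          ≤ (s.card : ℝ) * ∑ a ∈ s, (x a v - x a w) ^ 2 := by
      intro v w
      rw [← Finset.sum_sub_distrib]
      exact_mod_cast sq_sum_le_card_mul_sum_sq (f := fun a => x a v - x a w) (s := s)
    calc ∑ v, ∑ w, ((∑ a ∈ s, x a v) - ∑ a ∈ s, x a w) ^ 2
        ≤ ∑ v, ∑ w : V, (s.card : ℝ) * ∑ a ∈ s, (x a v - x a w) ^ 2 := by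
          apply Finset.sum_le_sum; intro v _; apply Finset.sum_le_sum; intro w _; exact hpt v w
      _ = (s.card : ℝ) * ∑ v, ∑ w : V, ∑ a ∈ s, (x a v - x a w) ^ 2 := by
          simp only [← Finset.mul_sum]
      _ = (s.card : ℝ) * ∑ a ∈ s, ∑ v, ∑ w, (x a v - x a w) ^ 2 := by
          congr 1
          rw [show (∑ v : V, ∑ w : V, ∑ a ∈ s, (x a v - x a w) ^ 2)
              = ∑ v : V, ∑ a ∈ s, ∑ w : V, (x a v - x a w) ^ 2 from
            Finset.sum_congr rfl fun v _ => Finset.sum_comm]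
          exact Finset.sum_comm
      _ = (s.card : ℝ) * ∑ a ∈ s, 2 * Var (x a) := by
          congr 1; exact Finset.sum_congr rfl fun a _ => two_Var (x a)
      _ = 2 * ((s.card : ℝ) * ∑ a ∈ s, Var (x a)) := by
          rw [← Finset.mul_sum]; ring
  linarith

end HCAux

namespace HCAux

lemma Var_prod_identity {α β : Type*} [Fintype α] [Fintype β] (x : α × β → ℝ) :
    Var x = (Fintype.card β : ℝ) * ∑ b, Var (fun a => x (a, b))
      + Var (fun b => ∑ a, x (a, b)) := by
  simp only [Var, Fintype.card_prod, Fintype.sum_prod_type]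
  push_cast
  rw [Finset.mul_sum]
  simp only [mul_sub, Finset.sum_sub_distrib, ← Finset.mul_sum]
  rw [Finset.sum_comm (f := fun a b => x (a, b) ^ 2)]
  ring_nf
  congr 2
  rw [Finset.sum_comm]

lemma Var_prod_le {α β : Type*} [Fintype α] [Fintype β] (x : α × β → ℝ) :
    Var x ≤ (Fintype.card β : ℝ) * ∑ b, Var (fun a => x (a, b))
      + (Fintype.card α : ℝ) * ∑ a, Var (fun b => x (a, b)) := by
  rw [Var_prod_identity]
  have := Var_sum_le (Finset.univ : Finset α) (fun a b => x (a, b))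
  simp only [Finset.card_univ] at this
  linarith

lemma Var_bool (z : Bool → ℝ) : Var z = (z true - z false) ^ 2 := by
  simp [Var, Fintype.sum_bool]; ring

lemma Var_equiv {α β : Type*} [Fintype α] [Fintype β] (e : α ≃ β) (x : β → ℝ) :
    Var (fun a => x (e a)) = Var x := by
  unfold Var
  rw [Fintype.card_congr e, Fintype.sum_equiv e _ x (fun a => rfl),
    Fintype.sum_equiv e _ (fun b => x b ^ 2) (fun a => rfl)]

def flip {d : ℕ} (k : Fin d) (v : Fin d → Bool) : Fin d → Bool :=
  Function.update v k (!(v k))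

lemma flip_flip {d : ℕ} (k : Fin d) (v : Fin d → Bool) : flip k (flip k v) = v := by
  unfold flip
  rw [Function.update_self, Function.update_idem, Bool.not_not, Function.update_eq_self]

lemma flip_apply_self {d : ℕ} (k : Fin d) (v : Fin d → Bool) : flip k v k = !(v k) :=
  Function.update_self _ _ _

lemma flip_apply_ne {d : ℕ} {k l : Fin d} (h : l ≠ k) (v : Fin d → Bool) :
    flip k v l = v l := Function.update_of_ne h _ _

lemma flip_zero_cons {d : ℕ} (a : Bool) (b : Fin d → Bool) :
    flip 0 (Fin.cons a b) = Fin.cons (!a) b := by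
  unfold flip
  rw [Fin.cons_zero, Fin.update_cons_zero]

lemma flip_succ_cons {d : ℕ} (j : Fin d) (a : Bool) (b : Fin d → Bool) :
    flip j.succ (Fin.cons a b) = Fin.cons a (flip j b) := by
  unfold flip
  rw [Fin.cons_succ, Fin.cons_update]

lemma cube_poincare : ∀ (d : ℕ) (x : (Fin d → Bool) → ℝ),
    4 * Var x ≤ (Fintype.card (Fin d → Bool) : ℝ)
      * ∑ k : Fin d, ∑ v, (x v - x (flip k v)) ^ 2 := by
  intro d
  induction d with
  | zero =>
      intro x
      simp [Var]
  | succ d ih =>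
      intro x
      set N : ℝ := (Fintype.card (Fin d → Bool) : ℝ) with hN
      have hNpos : 0 < N := by positivity
      let e : Bool × (Fin d → Bool) ≃ (Fin (d+1) → Bool) :=
        (Fin.consEquiv (fun _ => Bool))
      have he : ∀ a b, e (a, b) = Fin.cons a b := fun a b => rfl
      let y : Bool × (Fin d → Bool) → ℝ := fun p => x (e p)
      have hVar : Var x = Var y := (Var_equiv e x).symm
      have hcard : (Fintype.card (Fin (d+1) → Bool) : ℝ) = 2 * N := by
        rw [hN]
        norm_cast
        simp [Fintype.card_fun]
        ring
      -- ES bound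
      have hES := Var_prod_le y
      simp only [Fintype.card_bool] at hES
      -- bool variance
      have hb : ∀ b, Var (fun a => y (a, b)) = (y (true, b) - y (false, b)) ^ 2 :=
        fun b => Var_bool _
      -- reindex RHS
      have hsum : ∀ (F : (Fin (d+1) → Bool) → ℝ),
          ∑ v, F v = ∑ a : Bool, ∑ b : Fin d → Bool, F (Fin.cons a b) := by
        intro F
        rw [← Fintype.sum_equiv e (fun p => F (e p)) F (fun p => rfl), Fintype.sum_prod_type]
        rfl
      have hzero : ∑ v, (x v - x (flip 0 v)) ^ 2
          = 2 * ∑ b, (y (true, b) - y (false, b)) ^ 2 := by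
        rw [hsum]
        simp only [Fintype.sum_bool, flip_zero_cons]
        rw [← Finset.sum_add_distrib, Finset.mul_sum]
        apply Finset.sum_congr rfl
        intro b _
        simp only [y, he, Bool.not_true, Bool.not_false]
        ring
      have hsucc : ∀ j : Fin d, ∑ v, (x v - x (flip j.succ v)) ^ 2
          = ∑ a : Bool, ∑ b, (y (a, b) - y (a, flip j b)) ^ 2 := by
        intro j
        rw [hsum]
        apply Finset.sum_congr rfl; intro a _
        apply Finset.sum_congr rfl; intro b _
        rw [flip_succ_cons]
        rfl
      have hih : ∀ a : Bool, 4 * Var (fun b => y (a, b))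
          ≤ N * ∑ j : Fin d, ∑ b, (y (a, b) - y (a, flip j b)) ^ 2 := fun a => ih _
      rw [hcard, hVar, Fin.sum_univ_succ]
      have hsumih : ∑ a : Bool, (4 * Var fun b => y (a, b))
          ≤ ∑ a : Bool, N * ∑ j : Fin d, ∑ b, (y (a, b) - y (a, flip j b)) ^ 2 :=
        Finset.sum_le_sum fun a _ => hih a
      simp only [← Finset.mul_sum] at hsumih
      rw [hzero]
      rw [Finset.sum_congr rfl fun (j : Fin d) _ => hsucc j]
      rw [Finset.sum_comm (f := fun (j : Fin d) (a : Bool) =>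
        ∑ b, (y (a, b) - y (a, flip j b)) ^ 2)]
      rw [Finset.sum_congr rfl fun b (_ : b ∈ Finset.univ) => hb b] at hES
      set A := ∑ a : Bool, Var fun b => y (a, b) with hA
      set B := ∑ b : Fin d → Bool, (y (true, b) - y (false, b)) ^ 2 with hB
      set C := ∑ a : Bool, ∑ j : Fin d, ∑ b, (y (a, b) - y (a, flip j b)) ^ 2 with hC
      have h1 : Var y ≤ N * B + 2 * A := by exact_mod_cast hES
      have h2 : 4 * A ≤ N * C := hsumih
      nlinarith [h1, h2]

lemma cube_adj_flip {d : ℕ} (k : Fin d) (v : Fin d → Bool) :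
    (cubeGraph d).Adj v (flip k v) := by
  rw [cubeGraph, SimpleGraph.fromRel_adj]
  constructor
  · intro hv
    have := congrFun hv k
    rw [flip_apply_self] at this
    exact (Bool.not_ne_self (v k)) this.symm
  · left
    exact ⟨k, by rw [flip_apply_self]; exact (Bool.not_ne_self (v k)).symm,
      fun l hl => (flip_apply_ne hl v).symm⟩

lemma cube_adj_elim {d : ℕ} {i j : Fin d → Bool} (h : (cubeGraph d).Adj i j) :
    ∃ k : Fin d, j = flip k i := by
  rw [cubeGraph, SimpleGraph.fromRel_adj] at h
  obtain ⟨hne, hrel⟩ := h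
  have : ∃ c : Fin d, i c ≠ j c ∧ ∀ k : Fin d, k ≠ c → i k = j k := by
    rcases hrel with h | h
    · exact h
    · obtain ⟨c, hc, hrest⟩ := h
      exact ⟨c, fun hh => hc hh.symm, fun k hk => (hrest k hk).symm⟩
  obtain ⟨c, hc, hrest⟩ := this
  refine ⟨c, funext fun l => ?_⟩
  by_cases hl : l = c
  · subst hl
    rw [flip_apply_self]
    cases hh : i l <;> cases hh2 : j l <;> simp_all
  · rw [flip_apply_ne hl, hrest l hl]

lemma flip_ne {d : ℕ} (k : Fin d) (v : Fin d → Bool) : flip k v ≠ v := by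
  intro h
  have := congrFun h k
  rw [flip_apply_self] at this
  exact Bool.not_ne_self (v k) this

section Incidence

variable {d m : ℕ} {D : Matrix (Fin m) (Fin d → Bool) ℝ}

/-- the row predicate -/
def Pred (D : Matrix (Fin m) (Fin d → Bool) ℝ) (v w : Fin d → Bool) (e : Fin m) : Prop :=
  (D e v = 1 ∧ D e w = -1) ∨ (D e v = -1 ∧ D e w = 1)

lemma row_char (hD : IsIncidence (cubeGraph d) D) (e : Fin m) :
    ∃ i j : Fin d → Bool, (cubeGraph d).Adj i j ∧ D e i = 1 ∧ D e j = -1 ∧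
      (∀ x : (Fin d → Bool) → ℝ, D.mulVec x e = x i - x j) ∧
      (∀ v w, v ≠ w → Pred D v w e → (v = i ∧ w = j) ∨ (v = j ∧ w = i)) := by
  obtain ⟨i, j, hadj, h1, h2, h0⟩ := hD.1 e
  have hij : i ≠ j := hadj.ne
  have hmem : ∀ u, D e u ≠ 0 → u = i ∨ u = j := by
    intro u hu
    by_contra hc
    push_neg at hc
    exact hu (h0 u hc.1 hc.2)
  refine ⟨i, j, hadj, h1, h2, ?_, ?_⟩
  · intro x
    have : ∀ u ∈ (Finset.univ : Finset (Fin d → Bool)), u ∉ ({i, j} : Finset (Fin d → Bool)) →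
        D e u * x u = 0 := by
      intro u _ hu
      simp only [Finset.mem_insert, Finset.mem_singleton] at hu
      push_neg at hu
      rw [h0 u hu.1 hu.2, zero_mul]
    rw [Matrix.mulVec, dotProduct, ← Finset.sum_subset (Finset.subset_univ _) this,
      Finset.sum_pair hij, h1, h2]
    ring
  · intro v w hvw hp
    have hv : v = i ∨ v = j := by
      apply hmem
      rcases hp with ⟨h, _⟩ | ⟨h, _⟩ <;> rw [h] <;> norm_num
    have hw : w = i ∨ w = j := by
      apply hmem
      rcases hp with ⟨_, h⟩ | ⟨_, h⟩ <;> rw [h] <;> norm_num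
    rcases hv with hv | hv
    · left
      refine ⟨hv, ?_⟩
      subst hv
      rcases hw with hw | hw
      · exact absurd hw.symm hvw
      · exact hw
    · right
      refine ⟨hv, ?_⟩
      subst hv
      rcases hw with hw | hw
      · exact hw
      · exact absurd hw.symm hvw

lemma sum_flip_eq (hD : IsIncidence (cubeGraph d) D) (x : (Fin d → Bool) → ℝ) :
    ∑ k : Fin d, ∑ v, (x v - x (flip k v)) ^ 2 = 2 * ∑ e, (D.mulVec x e) ^ 2 := by
  classical
  set f : Fin d × (Fin d → Bool) → ℝ := fun p => (x p.2 - x (flip p.1 p.2)) ^ 2 with hf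
  have hprod : ∑ k : Fin d, ∑ v, (x v - x (flip k v)) ^ 2 = ∑ p, f p := by
    rw [Fintype.sum_prod_type]
  set s0 : Finset (Fin d × (Fin d → Bool)) :=
    Finset.univ.filter (fun p => p.2 p.1 = false) with hs0
  set s1 : Finset (Fin d × (Fin d → Bool)) :=
    Finset.univ.filter (fun p => ¬ p.2 p.1 = false) with hs1
  have hsplit : ∑ p ∈ s0, f p + ∑ p ∈ s1, f p = ∑ p, f p :=
    Finset.sum_filter_add_sum_filter_not _ _ _
  have hflipval : ∀ p : Fin d × (Fin d → Bool), f (p.1, flip p.1 p.2) = f p := by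
    intro p
    simp only [hf, flip_flip]
    ring
  have heq01 : ∑ p ∈ s1, f p = ∑ p ∈ s0, f p := by
    apply Finset.sum_nbij' (fun p => (p.1, flip p.1 p.2)) (fun p => (p.1, flip p.1 p.2))
    · intro p hp
      simp only [hs1, Finset.mem_filter, Finset.mem_univ, true_and] at hp
      simp only [hs0, Finset.mem_filter, Finset.mem_univ, true_and, flip_apply_self]
      simp [Bool.not_eq_false] at hp
      simp [hp]
    · intro p hp
      simp only [hs0, Finset.mem_filter, Finset.mem_univ, true_and] at hp
      simp only [hs1, Finset.mem_filter, Finset.mem_univ, true_and, flip_apply_self]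
      simp [hp]
    · intro p _
      simp [flip_flip]
    · intro p _
      simp [flip_flip]
    · intro p _
      exact (hflipval p).symm
  -- the bijection with rows
  have hbij : ∑ p ∈ s0, f p = ∑ e, (D.mulVec x e) ^ 2 := by
    have hEdef : ∀ p : Fin d × (Fin d → Bool),
        ∃ e : Fin m, Pred D p.2 (flip p.1 p.2) e ∧
          ∀ e' : Fin m, Pred D p.2 (flip p.1 p.2) e' → e' = e :=
      fun p => hD.2 p.2 (flip p.1 p.2) (cube_adj_flip p.1 p.2)
    set E : Fin d × (Fin d → Bool) → Fin m := fun p => (hEdef p).choose with hE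
    have hEpred : ∀ p, Pred D p.2 (flip p.1 p.2) (E p) := fun p => (hEdef p).choose_spec.1
    have hEuniq : ∀ p e', Pred D p.2 (flip p.1 p.2) e' → e' = E p :=
      fun p => (hEdef p).choose_spec.2
    apply Finset.sum_bij (fun p _ => E p)
    · intro p _; exact Finset.mem_univ _
    · -- injectivity
      intro p hp q hq hpq
      simp only [hs0, Finset.mem_filter, Finset.mem_univ, true_and] at hp hq
      obtain ⟨i, j, hadj, h1, h2, hmv, hchar⟩ := row_char hD (E p)
      have cp := hchar p.2 (flip p.1 p.2) (Ne.symm (flip_ne _ _)) (hEpred p)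
      have cq := hchar q.2 (flip q.1 q.2) (Ne.symm (flip_ne _ _)) (hpq ▸ hEpred q)
      have key : (p.2 = q.2 ∧ flip p.1 p.2 = flip q.1 q.2) ∨
          (p.2 = flip q.1 q.2 ∧ flip p.1 p.2 = q.2) := by
        rcases cp with ⟨e1, e2⟩ | ⟨e1, e2⟩ <;> rcases cq with ⟨e3, e4⟩ | ⟨e3, e4⟩
        · exact Or.inl ⟨e1.trans e3.symm, e2.trans e4.symm⟩
        · exact Or.inr ⟨e1.trans e4.symm, e2.trans e3.symm⟩
        · exact Or.inr ⟨e1.trans e4.symm, e2.trans e3.symm⟩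
        · exact Or.inl ⟨e1.trans e3.symm, e2.trans e4.symm⟩
      rcases key with ⟨hv, hfl⟩ | ⟨hv, hfl⟩
      · -- same vertex, so same coordinate
        have hk : p.1 = q.1 := by
          by_contra hk
          have hcf := congrFun hfl p.1
          rw [flip_apply_self, flip_apply_ne hk, ← hv] at hcf
          exact Bool.not_ne_self _ hcf
        exact Prod.ext hk hv
      · -- contradiction case
        exfalso
        have h1 : p.2 q.1 = !(q.2 q.1) := by rw [hv, flip_apply_self]
        have h2 : q.2 p.1 = !(p.2 p.1) := by
          have := congrFun hfl p.1
          rw [flip_apply_self] at this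
          exact this.symm
        rw [hp] at h2
        rw [hq] at h1
        -- p.2 q.1 = true, q.2 p.1 = true, but p.2 p.1 = false, q.2 q.1 = false
        by_cases hk : p.1 = q.1
        · rw [hk] at hp
          rw [hp] at h1
          simp at h1
        · have hcf := congrFun hv p.1
          rw [flip_apply_ne hk] at hcf
          rw [hp, h2] at hcf
          simp at hcf
    · -- surjectivity
      intro e _
      obtain ⟨i, j, hadj, h1, h2, hmv, hchar⟩ := row_char hD e
      obtain ⟨k, hk⟩ := cube_adj_elim hadj
      by_cases hik : i k = false
      · refine ⟨(k, i), ?_, ?_⟩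
        · simp [hs0, hik]
        · refine (hEuniq (k, i) e ?_).symm
          left
          refine ⟨h1, ?_⟩
          show D e (flip k i) = -1
          rw [← hk]; exact h2
      · refine ⟨(k, j), ?_, ?_⟩
        · have : j k = false := by
            rw [hk, flip_apply_self]
            simp [Bool.not_eq_false] at hik
            simp [hik]
          simp [hs0, this]
        · refine (hEuniq (k, j) e ?_).symm
          right
          have hfj : flip k j = i := by rw [hk, flip_flip]
          refine ⟨h2, ?_⟩
          show D e (flip k j) = 1
          rw [hfj]; exact h1
    · -- values
      intro p hp
      obtain ⟨i, j, hadj, h1, h2, hmv, hchar⟩ := row_char hD (E p)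
      have cp := hchar p.2 (flip p.1 p.2) (Ne.symm (flip_ne _ _)) (hEpred p)
      rw [hmv x]
      rcases cp with ⟨e1, e2⟩ | ⟨e1, e2⟩
      · rw [hf]; rw [← e1, ← e2]
      · rw [hf]; rw [← e1, ← e2]; ring
  rw [hprod, ← hsplit, heq01, hbij]
  ring

theorem hypercube_inverse_scaling_factor' :
    ∀ d : ℕ, 1 ≤ d →
      ∀ (m : ℕ) (D : Matrix (Fin m) (Fin d → Bool) ℝ),
        IsIncidence (cubeGraph d) D →
        ∀ S : Matrix (Fin d → Bool) (Fin m) ℝ,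
          (D * S * D = D ∧ S * D * S = S ∧ (D * S)ᵀ = D * S ∧ (S * D)ᵀ = S * D) →
          ∀ j : Fin m, Real.sqrt (∑ i, S i j ^ 2) ≤ 1 := by
  intro d _ m D hD S hS j
  classical
  obtain ⟨hS1, hS2, hS3, hS4⟩ := hS
  set s : (Fin d → Bool) → ℝ := fun v => S v j with hsdef
  set N : ℝ := (Fintype.card (Fin d → Bool) : ℝ) with hN
  have hNpos : (0:ℝ) < N := by rw [hN]; positivity
  -- row sums of D vanish
  have hrow : ∀ e, ∑ v, D e v = 0 := by
    intro e
    obtain ⟨i, j', hadj, h1, h2, hmv, _⟩ := row_char hD e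
    have h := hmv (fun _ => 1)
    simpa [Matrix.mulVec, dotProduct] using h
  -- mean zero
  have hSDsym : ∀ a b, (S * D) a b = (S * D) b a := by
    intro a b
    calc (S * D) a b = ((S * D)ᵀ) b a := (Matrix.transpose_apply _ _ _).symm
      _ = (S * D) b a := by rw [hS4]
  have hmean : ∑ v, s v = 0 := by
    have hexp : ∀ v, s v = ∑ w, (S * D) v w * S w j := by
      intro v
      have : S v j = (S * D * S) v j := by rw [hS2]
      rw [hsdef]
      simp only [this, Matrix.mul_apply]
    calc ∑ v, s v = ∑ v, ∑ w, (S * D) v w * S w j :=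
          Finset.sum_congr rfl fun v _ => hexp v
      _ = ∑ w, ∑ v, (S * D) v w * S w j := Finset.sum_comm
      _ = ∑ w, (∑ v, (S * D) v w) * S w j := by
          exact Finset.sum_congr rfl fun w _ => by rw [Finset.sum_mul]
      _ = 0 := by
          apply Finset.sum_eq_zero
          intro w _
          have : ∑ v, (S * D) v w = 0 := by
            calc ∑ v, (S * D) v w = ∑ v, (S * D) w v :=
                  Finset.sum_congr rfl fun v _ => hSDsym v w
              _ = ∑ v, ∑ e, S w e * D e v := by
                  exact Finset.sum_congr rfl fun v _ => Matrix.mul_apply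
              _ = ∑ e, S w e * ∑ v, D e v := by
                  rw [Finset.sum_comm]
                  exact Finset.sum_congr rfl fun e _ => by rw [Finset.mul_sum]
              _ = 0 := by
                  apply Finset.sum_eq_zero
                  intro e _
                  rw [hrow e, mul_zero]
          rw [this, zero_mul]
  -- projection bound
  have hPval : ∀ e, D.mulVec s e = (D * S) e j := by
    intro e
    simp [Matrix.mulVec, dotProduct, Matrix.mul_apply, hsdef]
  have hPsym : ∀ a b, (D * S) a b = (D * S) b a := by
    intro a b
    calc (D * S) a b = ((D * S)ᵀ) b a := (Matrix.transpose_apply _ _ _).symm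
      _ = (D * S) b a := by rw [hS3]
  have hidem : (D * S) * (D * S) = D * S := by
    rw [← Matrix.mul_assoc, hS1]
  have hkey : ∑ e, ((D * S) e j) ^ 2 = (D * S) j j := by
    have h1 : ∀ e, ((D * S) e j) ^ 2 = (D * S) j e * (D * S) e j := by
      intro e; rw [hPsym j e]; ring
    rw [Finset.sum_congr rfl fun e _ => h1 e, ← Matrix.mul_apply, hidem]
  have hjj_nonneg : 0 ≤ (D * S) j j := by
    rw [← hkey]
    exact Finset.sum_nonneg fun e _ => sq_nonneg _
  have hjj_sq : ((D * S) j j) ^ 2 ≤ (D * S) j j :=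
    calc ((D * S) j j) ^ 2 ≤ ∑ e, ((D * S) e j) ^ 2 :=
          Finset.single_le_sum (f := fun e => ((D * S) e j) ^ 2)
            (fun e _ => sq_nonneg _) (Finset.mem_univ j)
      _ = (D * S) j j := hkey
  have hjj_le : (D * S) j j ≤ 1 := by nlinarith [hjj_sq, hjj_nonneg]
  have hP : ∑ e, (D.mulVec s e) ^ 2 ≤ 1 := by
    calc ∑ e, (D.mulVec s e) ^ 2 = ∑ e, ((D * S) e j) ^ 2 :=
          Finset.sum_congr rfl fun e _ => by rw [hPval e]
      _ = (D * S) j j := hkey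
      _ ≤ 1 := hjj_le
  -- Poincaré
  have hpoin := cube_poincare d s
  rw [sum_flip_eq hD s] at hpoin
  have hVar : Var s = N * ∑ v, s v ^ 2 := by
    rw [Var, hmean, ← hN]; ring
  rw [hVar] at hpoin
  have h2 : N * (4 * ∑ v, s v ^ 2) ≤ N * 2 := by nlinarith [hP, hNpos.le]
  have h3 : 4 * ∑ v, s v ^ 2 ≤ 2 := le_of_mul_le_mul_left h2 hNpos
  have : ∑ i, S i j ^ 2 ≤ 1 := by
    have : ∑ v, s v ^ 2 = ∑ i, S i j ^ 2 := rfl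
    linarith [this ▸ h3]
  exact Real.sqrt_le_one.mpr this

end Incidence

end HCAux

/-- Proposition 3.5: for every `d ≥ 1`, every column of the
Moore–Penrose pseudoinverse of the incidence matrix of the d-dimensional
hypercube has Euclidean norm at most `1`, i.e. `ρ(D_□) ≤ 1`. -/
theorem hypercube_inverse_scaling_factor :
    ∀ d : ℕ, 1 ≤ d →
      ∀ (m : ℕ) (D : Matrix (Fin m) (Fin d → Bool) ℝ),
        IsIncidence (cubeGraph d) D →
        ∀ S : Matrix (Fin d → Bool) (Fin m) ℝ, IsMoorePenrose D S →
          ∀ j : Fin m, colNorm S j ≤ 1 := by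
  intro d hd m D hD S hS j
  exact HCAux.hypercube_inverse_scaling_factor' d hd m D hD S hS j
end
end

section
/- Let D be the incidence matrix of the complete graph K_n on n ≥ 2 vertices (so m = n(n−1)/2 edges). Then every column s_j of the Moore–Penrose pseudoinverse D† satisfies ‖s_j‖₂² ≤ 2/n², hence ρ(D) ≤ √2/n; moreover the compatibility factor satisfies κ_T(D) ≥ 1/(2√(n−1)) for every T ⊆ [m]. -/
open MeasureTheory ProbabilityTheory Matrix

noncomputable section

/-!
`DᵀD` is the graph Laplacian; for `K_n` it equals `n • 1 - J`, and since the rows of `D` sum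
to zero this gives `D Dᵀ D = n D`. Hence `D† = Dᵀ / n`, whose columns are rows of `D` scaled by
`1/n`, of squared norm `2/n²`. For the compatibility factor, `‖Dθ‖² = n‖θ‖² - (∑ θ)² ≤ n‖θ‖²`,
and Cauchy–Schwarz on `T` gives `‖(Dθ)_T‖₁ ≤ √|T| · √n · ‖θ‖`, so `κ_T ≥ 1/√n ≥ 1/(2√(n-1))`.
-/

open Finset

theorem IsMoorePenrose.unique {E V : Type*} [Fintype V] [Fintype E] {D : Matrix E V ℝ}
    {S S' : Matrix V E ℝ} (hS : IsMoorePenrose D S) (hS' : IsMoorePenrose D S') : S = S' := by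
  obtain ⟨hS1, hS2, hS3, hS4⟩ := hS
  obtain ⟨hS'1, hS'2, hS'3, hS'4⟩ := hS'
  have hDS : D * S = D * S' :=
    calc D * S = (D * S)ᵀ := hS3.symm
      _ = (D * S' * (D * S))ᵀ := by rw [← Matrix.mul_assoc, hS'1]
      _ = D * S * (D * S') := by rw [transpose_mul, hS3, hS'3]
      _ = D * S' := by rw [← Matrix.mul_assoc, hS1]
  have hSD : S * D = S' * D :=
    calc S * D = (S * D)ᵀ := hS4.symm
      _ = (S * D * (S' * D))ᵀ := by rw [Matrix.mul_assoc S D, ← Matrix.mul_assoc D, hS'1]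
      _ = S' * D * (S * D) := by rw [transpose_mul, hS4, hS'4]
      _ = S' * D := by rw [Matrix.mul_assoc S', ← Matrix.mul_assoc D, hS1]
  calc S = S * D * S := hS2.symm
    _ = S' * D * S' := by rw [hSD, Matrix.mul_assoc, hDS, ← Matrix.mul_assoc]
    _ = S' := hS'2

theorem isMoorePenrose_inv_smul_transpose {E V : Type*} [Fintype V] [Fintype E]
    {D : Matrix E V ℝ} {c : ℝ} (hc : c ≠ 0) (hD : D * Dᵀ * D = c • D) :
    IsMoorePenrose D (c⁻¹ • Dᵀ) := by
  have hDt : Dᵀ * D * Dᵀ = c • Dᵀ := by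
    simpa [Matrix.mul_assoc] using congrArg transpose hD
  refine ⟨?_, ?_, ?_, ?_⟩
  · rw [Matrix.mul_smul, Matrix.smul_mul, hD, smul_smul, inv_mul_cancel₀ hc, one_smul]
  · rw [Matrix.smul_mul, Matrix.smul_mul, Matrix.mul_smul, hDt, smul_smul, smul_smul,
      mul_assoc, inv_mul_cancel₀ hc, mul_one]
  · simp [Matrix.transpose_mul]
  · simp [Matrix.transpose_mul]

theorem SimpleGraph.lapMatrix_top {V : Type*} [Fintype V] [DecidableEq V] :
    (⊤ : SimpleGraph V).lapMatrix ℝ = (Fintype.card V : ℝ) • 1 - of fun _ _ => 1 := by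
  ext i j
  rcases eq_or_ne i j with rfl | hij
  · have : 1 ≤ Fintype.card V := Fintype.card_pos_iff.mpr ⟨i⟩
    simp [lapMatrix, degMatrix, Nat.cast_sub this]
  · simp [lapMatrix, degMatrix, hij]

namespace IsIncidence

variable {V E : Type*} {G : SimpleGraph V} {D : Matrix E V ℝ}

theorem exists_row_eq [DecidableEq V] (hD : IsIncidence G D) (e : E) :
    ∃ a b, G.Adj a b ∧ D e = Pi.single a 1 - Pi.single b 1 := by
  obtain ⟨a, b, hab, ha, hb, h0⟩ := hD.1 e
  refine ⟨a, b, hab, funext fun k => ?_⟩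
  rcases eq_or_ne k a with rfl | hka
  · simp [ha, hab.ne]
  rcases eq_or_ne k b with rfl | hkb
  · simp [hb, hka]
  · simp [h0 k hka hkb, hka, hkb]

theorem row_ne_zero (hD : IsIncidence G D) (e : E) : D e ≠ 0 := by
  obtain ⟨a, -, -, ha, -⟩ := hD.1 e
  exact fun h => by simp [h] at ha

theorem adj_and_signs_of_mul_ne_zero (hD : IsIncidence G D) {e : E} {i k : V} (hik : i ≠ k)
    (h : D e i * D e k ≠ 0) :
    G.Adj i k ∧ ((D e i = 1 ∧ D e k = -1) ∨ (D e i = -1 ∧ D e k = 1)) := by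
  classical
  obtain ⟨a, b, hab, hrow⟩ := hD.exists_row_eq e
  simp only [hrow, Pi.sub_apply, Pi.single_apply] at h ⊢
  by_cases hia : i = a <;> by_cases hib : i = b <;> by_cases hka : k = a <;>
    by_cases hkb : k = b <;> simp_all [hab.ne, hab.symm]

theorem sum_mul_of_ne [Fintype E] [DecidableRel G.Adj] (hD : IsIncidence G D) {i k : V}
    (hik : i ≠ k) : ∑ e, D e i * D e k = -G.adjMatrix ℝ i k := by
  by_cases hadj : G.Adj i k
  · obtain ⟨e₀, he₀, huniq⟩ := hD.2 i k hadj
    rw [Finset.sum_eq_single e₀ (fun e _ hne => by_contra fun h =>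
      hne (huniq e (hD.adj_and_signs_of_mul_ne_zero hik h).2)) (by simp)]
    rcases he₀ with ⟨h1, h2⟩ | ⟨h1, h2⟩ <;> simp [h1, h2, hadj]
  · rw [Finset.sum_eq_zero fun e _ => by_contra fun h =>
      hadj (hD.adj_and_signs_of_mul_ne_zero hik h).1]
    simp [hadj]

variable [Fintype V]

theorem sum_row_eq_zero (hD : IsIncidence G D) (e : E) : ∑ k, D e k = 0 := by
  classical
  obtain ⟨a, b, -, hrow⟩ := hD.exists_row_eq e
  simp [hrow, Finset.sum_sub_distrib]

theorem sum_row_sq (hD : IsIncidence G D) (e : E) : ∑ k, D e k ^ 2 = 2 := by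
  classical
  obtain ⟨a, b, hab, hrow⟩ := hD.exists_row_eq e
  simp [hrow, sub_sq, Finset.sum_add_distrib, Finset.sum_sub_distrib, Pi.single_apply,
    hab.ne']
  norm_num

theorem sum_mul_self [Fintype E] [DecidableRel G.Adj] [DecidableEq V] (hD : IsIncidence G D)
    (i : V) : ∑ e, D e i * D e i = G.degree i := by
  have hrow : ∀ e, D e i * D e i = -∑ k ∈ univ.erase i, D e i * D e k := fun e => by
    have := congrArg (D e i * ·) (hD.sum_row_eq_zero e)
    simp only [mul_zero, ← Finset.add_sum_erase _ _ (mem_univ i), mul_add, Finset.mul_sum] at this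
    linarith
  calc ∑ e, D e i * D e i = ∑ k ∈ univ.erase i, -∑ e, D e i * D e k := by
        simp_rw [hrow, Finset.sum_neg_distrib]
        rw [Finset.sum_comm]
    _ = ∑ k, G.adjMatrix ℝ i k := by
        rw [← Finset.sum_erase univ (by simp : G.adjMatrix ℝ i i = 0)]
        exact Finset.sum_congr rfl fun k hk => by
          rw [hD.sum_mul_of_ne (ne_of_mem_erase hk).symm, neg_neg]
    _ = G.degree i := by simp [G.degree_eq_sum_if_adj, SimpleGraph.adjMatrix_apply]

theorem transpose_mul_self [Fintype E] [DecidableRel G.Adj] [DecidableEq V]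
    (hD : IsIncidence G D) : Dᵀ * D = G.lapMatrix ℝ := by
  ext i k
  rw [mul_apply]
  simp only [transpose_apply, SimpleGraph.lapMatrix, SimpleGraph.degMatrix, Matrix.sub_apply]
  rcases eq_or_ne i k with rfl | hik
  · simp [hD.sum_mul_self]
  · simp [hD.sum_mul_of_ne hik, hik]

theorem mul_transpose_mul_self_of_top [Fintype E] [DecidableEq V] (hD : IsIncidence ⊤ D) :
    D * Dᵀ * D = (Fintype.card V : ℝ) • D := by
  have hJ : D * (of fun _ _ => 1 : Matrix V V ℝ) = 0 := by
    ext e k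
    simp [mul_apply, hD.sum_row_eq_zero]
  rw [Matrix.mul_assoc, hD.transpose_mul_self, SimpleGraph.lapMatrix_top, Matrix.mul_sub, hJ,
    sub_zero, Matrix.mul_smul, Matrix.mul_one]

theorem sum_mulVec_sq_le_of_top [Fintype E] [DecidableEq V] (hD : IsIncidence ⊤ D)
    (θ : V → ℝ) :
    ∑ e, (D *ᵥ θ) e ^ 2 ≤ Fintype.card V * ∑ i, θ i ^ 2 := by
  have hquad : ∑ e, (D *ᵥ θ) e ^ 2 = θ ⬝ᵥ ((Dᵀ * D) *ᵥ θ) := by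
    rw [← mulVec_mulVec, dotProduct_mulVec, vecMul_transpose, dotProduct_comm]
    simp [dotProduct, sq]
  rw [hquad, hD.transpose_mul_self, SimpleGraph.lapMatrix_top]
  have hJ : (of fun _ _ => 1 : Matrix V V ℝ) *ᵥ θ = fun _ => ∑ j, θ j := by
    ext; simp [mulVec, dotProduct]
  calc θ ⬝ᵥ (((Fintype.card V : ℝ) • 1 - of fun _ _ => 1) *ᵥ θ)
      = Fintype.card V * ∑ i, θ i ^ 2 - (∑ i, θ i) ^ 2 := by
        simp [sub_mulVec, smul_mulVec, hJ, dotProduct, sq, Finset.sum_mul]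
        simp only [mul_sub, Finset.sum_sub_distrib, Finset.mul_sum, mul_left_comm]
    _ ≤ Fintype.card V * ∑ i, θ i ^ 2 := sub_le_self _ (sq_nonneg _)

end IsIncidence

theorem one_div_sqrt_le_compat {V E : Type*} [Fintype V] [Fintype E] [DecidableEq E]
    {D : Matrix E V ℝ} {c : ℝ} (hc : 1 ≤ c) (hrow : ∀ e, D e ≠ 0)
    (hD : ∀ θ, ∑ e, (D *ᵥ θ) e ^ 2 ≤ c * ∑ i, θ i ^ 2) (T : Finset E) :
    1 / √c ≤ compat D T := by
  classical
  rw [compat]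
  split_ifs with hT
  · rw [div_le_one (by positivity)]
    exact Real.one_le_sqrt.mpr hc
  obtain ⟨e₀, he₀⟩ := nonempty_iff_ne_empty.mpr hT
  obtain ⟨k, hk⟩ : ∃ k, D e₀ k ≠ 0 := by
    by_contra! h
    exact hrow e₀ (funext h)
  have hsingle : ∑ e ∈ T, |(D *ᵥ Pi.single k 1) e| ≠ 0 :=
    (Finset.sum_pos' (fun _ _ => abs_nonneg _) ⟨e₀, he₀, by simpa [mulVec_single_one]⟩).ne'
  refine le_csInf ⟨_, Pi.single k 1, hsingle, rfl⟩ ?_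
  rintro r ⟨θ, hs, rfl⟩
  set s := ∑ e ∈ T, |(D *ᵥ θ) e|
  have hs_pos : 0 < s := (Finset.sum_nonneg fun e _ => abs_nonneg ((D *ᵥ θ) e)).lt_of_ne' hs
  have hs_le : s ≤ √c * (√(#T : ℝ) * norm2 θ) := by
    rw [norm2, ← Real.sqrt_mul (Nat.cast_nonneg _), ← Real.sqrt_mul (by linarith)]
    refine Real.le_sqrt_of_sq_le ?_
    calc s ^ 2 ≤ #T * ∑ e ∈ T, |(D *ᵥ θ) e| ^ 2 := sq_sum_le_card_mul_sum_sq
      _ ≤ #T * ∑ e, (D *ᵥ θ) e ^ 2 := by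
          simp only [sq_abs]
          gcongr
          exact subset_univ T
      _ ≤ #T * (c * ∑ i, θ i ^ 2) := by gcongr; exact hD θ
      _ = c * (#T * ∑ i, θ i ^ 2) := by ring
  rw [div_le_div_iff₀ (by positivity) hs_pos]
  linarith

theorem colNorm_smul_transpose_sq {V E : Type*} [Fintype V] (D : Matrix E V ℝ) (c : ℝ)
    (j : E) :
    colNorm (c • Dᵀ) j ^ 2 = c ^ 2 * ∑ i, D j i ^ 2 := by
  rw [colNorm, Real.sq_sqrt (Finset.sum_nonneg fun _ _ => sq_nonneg _), Finset.mul_sum]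
  simp [mul_pow]

theorem complete_graph_factors_general (n : ℕ) (hn : 2 ≤ n)
    (m : ℕ)
    (D : Matrix (Fin m) (Fin n) ℝ)
    (hD : IsIncidence (⊤ : SimpleGraph (Fin n)) D)
    (S : Matrix (Fin n) (Fin m) ℝ) (hS : IsMoorePenrose D S) :
    (∀ j : Fin m, colNorm S j ^ 2 ≤ 2 / (n : ℝ) ^ 2) ∧
    (∀ j : Fin m, colNorm S j ≤ Real.sqrt 2 / n) ∧
    (∀ T : Finset (Fin m), 1 / (2 * Real.sqrt ((n : ℝ) - 1)) ≤ compat D T) := by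
  have hn' : (2 : ℝ) ≤ n := by exact_mod_cast hn
  have hS_eq : S = (n : ℝ)⁻¹ • Dᵀ :=
    hS.unique (isMoorePenrose_inv_smul_transpose (by positivity)
      (by simpa using hD.mul_transpose_mul_self_of_top))
  have hcol : ∀ j, colNorm S j ^ 2 = 2 / (n : ℝ) ^ 2 := fun j => by
    rw [hS_eq, colNorm_smul_transpose_sq, hD.sum_row_sq, inv_pow, inv_mul_eq_div]
  have hquad : ∀ θ, ∑ e, (D *ᵥ θ) e ^ 2 ≤ 4 * ((n : ℝ) - 1) * ∑ i, θ i ^ 2 := fun θ => by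
    have := hD.sum_mulVec_sq_le_of_top θ
    rw [Fintype.card_fin] at this
    exact this.trans (by gcongr; linarith)
  refine ⟨fun j => (hcol j).le, fun j => ?_, fun T => ?_⟩
  · have h0 : 0 ≤ colNorm S j := Real.sqrt_nonneg _
    rw [← Real.sqrt_sq h0, hcol j, Real.sqrt_div' _ (sq_nonneg _), Real.sqrt_sq (by positivity)]
  · have hkappa := one_div_sqrt_le_compat (by linarith) hD.row_ne_zero hquad T
    rwa [Real.sqrt_mul (by norm_num), show √(4 : ℝ) = 2 by norm_num] at hkappa

/-- Proposition 4.1: for the complete graph `K_n` (`n ≥ 2`,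
`m = n(n−1)/2` edges), every column of `D†` satisfies `‖s_j‖₂² ≤ 2/n²`, hence
`ρ(D) ≤ √2/n`; moreover `κ_T(D) ≥ 1/(2√(n−1))` for every `T`. -/
theorem complete_graph_factors (n : ℕ) (hn : 2 ≤ n)
    (m : ℕ) (hm : 2 * m = n * (n - 1))
    (D : Matrix (Fin m) (Fin n) ℝ)
    (hD : IsIncidence (⊤ : SimpleGraph (Fin n)) D)
    (S : Matrix (Fin n) (Fin m) ℝ) (hS : IsMoorePenrose D S) :
    (∀ j : Fin m, colNorm S j ^ 2 ≤ 2 / (n : ℝ) ^ 2) ∧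
    (∀ j : Fin m, colNorm S j ≤ Real.sqrt 2 / n) ∧
    (∀ T : Finset (Fin m), 1 / (2 * Real.sqrt ((n : ℝ) - 1)) ≤ compat D T) :=
  complete_graph_factors_general n hn m D hD S hS
end
end

section
/- Let D ∈ {−1,0,1}^{(n−1)×n} be the incidence matrix of the star graph S_n on n ≥ 2 vertices, whose center is vertex 1 (so the row of edge i has entry +1 in column 1 and −1 in column i+1). Then the matrix S ∈ ℝ^{n×(n−1)} with entries S_{i,j} = −(n−1)/n if i = j+1 and S_{i,j} = 1/n otherwise is the Moore–Penrose pseudoinverse of D; consequently, each column s_j of D† has ‖s_j‖₂² = (n² − n)/n² ≤ 1, so ρ(D) ≤ 1. Moreover, κ_T(D) ≥ 1/(2√|T|) for every nonempty T ⊆ [n−1]. -/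
open MeasureTheory ProbabilityTheory Matrix

noncomputable section

/-- The incidence matrix of the star graph on `n` vertices (center = vertex 1):
the row of edge `i` has `+1` in column 1 and `−1` in column `i+1`. -/
def starD (n : ℕ) : Matrix (Fin (n - 1)) (Fin n) ℝ :=
  fun e k => if (k : ℕ) = 0 then 1 else if (k : ℕ) = (e : ℕ) + 1 then -1 else 0

/-- The claimed pseudoinverse of `starD n`:
`S_{i,j} = −(n−1)/n` if `i = j+1` and `1/n` otherwise. -/
def starS (n : ℕ) : Matrix (Fin n) (Fin (n - 1)) ℝ :=
  fun i j => if (i : ℕ) = (j : ℕ) + 1 then -(((n : ℝ) - 1) / n) else 1 / n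

/-! The incidence matrix maps `θ` to the differences `θ₁ - θ_{j+1}` along the edges, and the
columns of `S` are `𝟙/n - e_{j+1}`. Hence `D S = I`, while `S D = I - 𝟙𝟙ᵀ/n` is the orthogonal
projection onto `𝟙^⊥`, in particular symmetric; these two identities already give the four
Penrose equations. Each column of `S` has squared norm `1 - 1/n`. Finally
`|θ₁ - θ_{j+1}| ≤ 2‖θ‖₂`, so `‖(Dθ)_T‖₁ ≤ 2|T|‖θ‖₂`, which bounds `κ_T(D)` from below. -/

theorem isMoorePenrose_of_mul_eq_one {E V : Type*} [Fintype V] [Fintype E] [DecidableEq E]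
    {D : Matrix E V ℝ} {S : Matrix V E ℝ} (hDS : D * S = 1) (hSD : (S * D)ᵀ = S * D) :
    IsMoorePenrose D S :=
  ⟨by rw [hDS, Matrix.one_mul], by rw [Matrix.mul_assoc, hDS, Matrix.mul_one],
    by rw [hDS, Matrix.transpose_one], hSD⟩

theorem abs_le_norm2 {V : Type*} [Fintype V] (θ : V → ℝ) (k : V) : |θ k| ≤ norm2 θ := by
  rw [norm2, ← Real.sqrt_sq_eq_abs]
  exact Real.sqrt_le_sqrt (Finset.single_le_sum (fun i _ => sq_nonneg (θ i)) (Finset.mem_univ k))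

theorem one_div_mul_sqrt_card_le_compat {V E : Type*} [Fintype V] [Fintype E] [DecidableEq E]
    {D : Matrix E V ℝ} {c : ℝ} (hD : ∀ θ e, |(D *ᵥ θ) e| ≤ c * norm2 θ) {T : Finset E}
    (hT : ∃ θ, ∑ e ∈ T, |(D *ᵥ θ) e| ≠ 0) :
    1 / (c * Real.sqrt T.card) ≤ compat D T := by
  have hT_ne : T ≠ ∅ := by
    rintro rfl
    simp at hT
  rw [compat, if_neg hT_ne]
  obtain ⟨θ₀, hθ₀⟩ := hT
  refine le_csInf ⟨_, θ₀, hθ₀, rfl⟩ ?_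
  rintro r ⟨θ, hθ, rfl⟩
  set s := ∑ e ∈ T, |(D *ᵥ θ) e|
  have hs : 0 < s := (Finset.sum_nonneg fun e _ => abs_nonneg _).lt_of_ne' hθ
  have hs_le : s ≤ T.card * (c * norm2 θ) := by
    simpa using Finset.sum_le_sum fun e (_ : e ∈ T) => hD θ e
  have hc : 0 < c := pos_of_mul_pos_left
    (pos_of_mul_pos_right (hs.trans_le hs_le) (Nat.cast_nonneg _)) (Real.sqrt_nonneg _)
  have hcard : 0 < Real.sqrt T.card :=
    Real.sqrt_pos.2 (Nat.cast_pos.2 (Finset.card_pos.2 (Finset.nonempty_iff_ne_empty.2 hT_ne)))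
  rw [div_le_div_iff₀ (mul_pos hc hcard) hs]
  calc 1 * s ≤ T.card * (c * norm2 θ) := by rw [one_mul]; exact hs_le
    _ = Real.sqrt T.card * norm2 θ * (c * Real.sqrt T.card) := by
      linear_combination (c * norm2 θ) * (Real.mul_self_sqrt (Nat.cast_nonneg T.card)).symm

theorem Fin.sum_ite_val_eq {M : Type*} [AddCommMonoid M] {m t : ℕ} (ht : t < m)
    (f : Fin m → M) : ∑ k : Fin m, (if (k : ℕ) = t then f k else 0) = f ⟨t, ht⟩ := by
  rw [← Fintype.sum_ite_eq' (⟨t, ht⟩ : Fin m) f]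
  simp only [Fin.ext_iff]

theorem Fin.sum_ite_eq_val_add_one {M : Type*} [AddCommMonoid M] {m : ℕ} (t : ℕ)
    (f : Fin m → M) :
    ∑ e : Fin m, (if t = e + 1 then f e else 0) =
      if h : 0 < t ∧ t ≤ m then f ⟨t - 1, by omega⟩ else 0 := by
  split_ifs with h
  · rw [← Fintype.sum_ite_eq' (⟨t - 1, by omega⟩ : Fin m) f]
    refine Finset.sum_congr rfl fun e _ => if_congr ?_ rfl rfl
    rw [Fin.ext_iff]
    change t = e + 1 ↔ (e : ℕ) = t - 1
    omega
  · exact Finset.sum_eq_zero fun e _ => if_neg (by omega)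

theorem starD_apply {n : ℕ} (e : Fin (n - 1)) (k : Fin n) :
    starD n e k = (if (k : ℕ) = 0 then 1 else 0) - if (k : ℕ) = e + 1 then 1 else 0 := by
  unfold starD
  split_ifs <;> first | omega | norm_num

theorem starS_apply {n : ℕ} (i : Fin n) (j : Fin (n - 1)) :
    starS n i j = 1 / n - if (i : ℕ) = j + 1 then 1 else 0 := by
  have hn : (n : ℝ) ≠ 0 := Nat.cast_ne_zero.2 i.pos.ne'
  unfold starS
  split_ifs
  · field_simp
    ring
  · ring

theorem starD_mulVec {n : ℕ} (θ : Fin n → ℝ) (e : Fin (n - 1)) :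
    (starD n *ᵥ θ) e = θ ⟨0, by have := e.isLt; omega⟩ - θ ⟨e + 1, by omega⟩ := by
  simp only [Matrix.mulVec, dotProduct, starD_apply, sub_mul, ite_mul, one_mul, zero_mul,
    Finset.sum_sub_distrib]
  rw [Fin.sum_ite_val_eq, Fin.sum_ite_val_eq]

theorem vecMul_starD {n : ℕ} (w : Fin (n - 1) → ℝ) (k : Fin n) :
    (w ᵥ* starD n) k = if h : (k : ℕ) = 0 then ∑ e, w e else -w ⟨k - 1, by omega⟩ := by
  simp only [Matrix.vecMul, dotProduct, starD_apply, mul_sub, mul_ite, mul_one, mul_zero,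
    Finset.sum_sub_distrib]
  split_ifs with hk
  · simp [hk]
  · rw [Fin.sum_ite_eq_val_add_one, dif_pos (by omega)]
    simp

theorem starD_mul_starS (n : ℕ) : starD n * starS n = 1 := by
  ext e f
  change (starD n *ᵥ fun k => starS n k f) e = _
  rw [starD_mulVec, starS_apply, starS_apply, Matrix.one_apply]
  simp [Fin.ext_iff]

theorem sum_starS_row {n : ℕ} (i : Fin n) :
    ∑ e, starS n i e = (if (i : ℕ) = 0 then 1 else 0) - 1 / n := by
  have hn : (n : ℝ) ≠ 0 := Nat.cast_ne_zero.2 i.pos.ne'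
  simp only [starS_apply, Finset.sum_sub_distrib, Finset.sum_const, Finset.card_univ,
    Fintype.card_fin, nsmul_eq_mul, Fin.sum_ite_eq_val_add_one]
  rw [Nat.cast_sub i.pos, Nat.cast_one]
  split_ifs <;> first | omega | (field_simp; ring)

theorem starS_mul_starD_apply {n : ℕ} (i k : Fin n) :
    (starS n * starD n) i k = (if i = k then 1 else 0) - 1 / n := by
  change (starS n i ᵥ* starD n) k = _
  by_cases hk : (k : ℕ) = 0
  · rw [vecMul_starD, dif_pos hk, sum_starS_row]
    simp only [Fin.ext_iff, hk]
  · have hik : (i : ℕ) = k - 1 + 1 ↔ (i : ℕ) = k := by omega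
    rw [vecMul_starD, dif_neg hk, starS_apply, neg_sub]
    simp only [Fin.ext_iff, hik]

theorem sum_sq_starS {n : ℕ} (j : Fin (n - 1)) :
    ∑ i, starS n i j ^ 2 = ((n : ℝ) ^ 2 - n) / (n : ℝ) ^ 2 := by
  have hn : (n : ℝ) ≠ 0 := Nat.cast_ne_zero.2 (by have := j.isLt; omega)
  have hsq : ∀ i : Fin n,
      starS n i j ^ 2 = 1 / n ^ 2 - if (i : ℕ) = j + 1 then (2 / n - 1 : ℝ) else 0 := by
    intro i
    rw [starS_apply]
    split_ifs <;> ring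
  simp only [hsq, Finset.sum_sub_distrib, Finset.sum_const, Finset.card_univ, Fintype.card_fin,
    nsmul_eq_mul]
  rw [Fin.sum_ite_val_eq (by omega)]
  field_simp
  ring

theorem abs_starD_mulVec_le {n : ℕ} (θ : Fin n → ℝ) (e : Fin (n - 1)) :
    |(starD n *ᵥ θ) e| ≤ 2 * norm2 θ := by
  rw [starD_mulVec, two_mul]
  exact (abs_sub _ _).trans (add_le_add (abs_le_norm2 θ _) (abs_le_norm2 θ _))

theorem sum_abs_starD_mulVec_center {n : ℕ} (T : Finset (Fin (n - 1))) :
    ∑ e ∈ T, |(starD n *ᵥ fun k => if (k : ℕ) = 0 then 1 else 0) e| = T.card := by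
  simp [starD_mulVec]

theorem star_graph_factors_general (n : ℕ) :
    IsMoorePenrose (starD n) (starS n) ∧
    (∀ j : Fin (n - 1), colNorm (starS n) j ^ 2 = ((n : ℝ) ^ 2 - n) / (n : ℝ) ^ 2) ∧
    (∀ j : Fin (n - 1), colNorm (starS n) j ≤ 1) ∧
    (∀ T : Finset (Fin (n - 1)), T.Nonempty →
      1 / (2 * Real.sqrt T.card) ≤ compat (starD n) T) := by
  refine ⟨isMoorePenrose_of_mul_eq_one (starD_mul_starS n) ?_, fun j => ?_, fun j => ?_,
    fun T hT => ?_⟩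
  · ext i k
    simp only [Matrix.transpose_apply, starS_mul_starD_apply, eq_comm]
  · rw [colNorm, Real.sq_sqrt (Finset.sum_nonneg fun i _ => sq_nonneg _), sum_sq_starS]
  · rw [colNorm, sum_sq_starS]
    exact Real.sqrt_le_one.2 (div_le_one_of_le₀ (sub_le_self _ (Nat.cast_nonneg n)) (sq_nonneg _))
  · refine one_div_mul_sqrt_card_le_compat abs_starD_mulVec_le
      ⟨fun k => if (k : ℕ) = 0 then 1 else 0, ?_⟩
    rw [sum_abs_starD_mulVec_center]
    exact_mod_cast hT.card_pos.ne'

/-- Proposition 4.3: `starS n` is the Moore–Penrose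
pseudoinverse of the incidence matrix `starD n` of the star graph `S_n`; each
of its columns has squared norm `(n² − n)/n² ≤ 1`, so `ρ(D) ≤ 1`; and
`κ_T(D) ≥ 1/(2√|T|)` for every nonempty `T`. -/
theorem star_graph_factors (n : ℕ) (hn : 2 ≤ n) :
    IsMoorePenrose (starD n) (starS n) ∧
    (∀ j : Fin (n - 1), colNorm (starS n) j ^ 2 = ((n : ℝ) ^ 2 - n) / (n : ℝ) ^ 2) ∧
    (∀ j : Fin (n - 1), colNorm (starS n) j ≤ 1) ∧
    (∀ T : Finset (Fin (n - 1)), T.Nonempty →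
      1 / (2 * Real.sqrt T.card) ≤ compat (starD n) T) :=
  star_graph_factors_general n
end
end

section
/- Let D be the incidence matrix of a connected graph G on n vertices with m edges, and suppose its graph Laplacian L = DᵀD has a spectral gap c₁ > 0, i.e. vᵀLv ≥ c₁·‖v‖₂² for every v ∈ ℝⁿ orthogonal to the all-ones vector (equivalently, the second smallest eigenvalue λ₂ of L satisfies λ₂ ≥ c₁). Then the inverse scaling factor satisfies ρ(D) ≤ √2/c₁, i.e. every column s_j of the Moore–Penrose pseudoinverse D† has ‖s_j‖₂ ≤ √2/c₁. -/
open MeasureTheory ProbabilityTheory Matrix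

noncomputable section

/-- Proposition 4.5: if the Laplacian `L = DᵀD` of a
connected graph has a spectral gap `c₁ > 0` (i.e. `vᵀLv ≥ c₁‖v‖²` for all `v`
orthogonal to the all-ones vector), then every column of the Moore–Penrose
pseudoinverse of `D` has Euclidean norm at most `√2/c₁`, i.e. `ρ(D) ≤ √2/c₁`. -/
theorem spectral_gap_inverse_scaling {n m : ℕ}
    (G : SimpleGraph (Fin n)) (hG : G.Connected)
    (D : Matrix (Fin m) (Fin n) ℝ) (hD : IsIncidence G D)
    (c₁ : ℝ) (hc₁ : 0 < c₁)
    (hgap : ∀ v : Fin n → ℝ, ∑ i, v i = 0 →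
      c₁ * ∑ i, v i ^ 2 ≤ v ⬝ᵥ (Dᵀ * D).mulVec v)
    (S : Matrix (Fin n) (Fin m) ℝ) (hS : IsMoorePenrose D S) :
    ∀ j : Fin m, colNorm S j ≤ Real.sqrt 2 / c₁ := by
  obtain ⟨hS1, hS2, hS3, hS4⟩ := hS
  intro j
  set sj : Fin n → ℝ := fun i => S i j with hsj
  set t : ℝ := colNorm S j with ht
  have ht0 : 0 ≤ t := Real.sqrt_nonneg _
  have htsq : t ^ 2 = ∑ i, sj i ^ 2 :=
    Real.sq_sqrt (Finset.sum_nonneg fun i _ => sq_nonneg _)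
  -- rows of D sum to zero
  have hrow : ∀ e : Fin m, ∑ k, D e k = 0 := by
    intro e
    obtain ⟨a, b, hadj, h1, h2, h0⟩ := hD.1 e
    have hne : a ≠ b := hadj.ne
    have hsub : ({a, b} : Finset (Fin n)) ⊆ Finset.univ := Finset.subset_univ _
    have : ∑ k, D e k = ∑ k ∈ ({a, b} : Finset (Fin n)), D e k := by
      refine (Finset.sum_subset hsub ?_).symm
      intro k _ hk
      simp only [Finset.mem_insert, Finset.mem_singleton, not_or] at hk
      exact h0 k hk.1 hk.2
    rw [this, Finset.sum_pair hne, h1, h2]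
    ring
  -- column sums of S are zero
  have hcol : ∑ i, sj i = 0 := by
    have hSeq : ∀ i, sj i = ((S * D) * S) i j := by
      intro i; rw [hS2]
    have hswap : ∑ i, sj i = ∑ k, (∑ i, (S * D) i k) * S k j := by
      simp only [hSeq, Matrix.mul_apply]
      rw [Finset.sum_comm]
      simp [Finset.sum_mul]
    rw [hswap]
    have hzero : ∀ k, (∑ i, (S * D) i k) = 0 := by
      intro k
      have hsymm : ∀ i, (S * D) i k = (S * D) k i := by
        intro i
        have := congrFun (congrFun hS4 i) k
        simpa [Matrix.transpose_apply] using this.symm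
      simp only [hsymm, Matrix.mul_apply]
      rw [Finset.sum_comm]
      have : ∀ e, ∑ i, S k e * D e i = 0 := by
        intro e
        rw [← Finset.mul_sum, hrow e, mul_zero]
      simp [this]
    simp [hzero]
  -- spectral gap applied to sj
  have hgap' := hgap sj hcol
  -- quadratic form equals (DS)_{jj}
  have hDsj : ∀ e, D.mulVec sj e = (D * S) e j := by
    intro e
    simp [Matrix.mulVec, dotProduct, Matrix.mul_apply, hsj]
  have hquad : sj ⬝ᵥ (Dᵀ * D).mulVec sj = (D * S) j j := by
    rw [← Matrix.mulVec_mulVec, Matrix.dotProduct_mulVec, Matrix.vecMul_transpose]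
    have h1 : D.mulVec sj ⬝ᵥ D.mulVec sj = ∑ e, (D * S) e j * (D * S) e j := by
      simp [dotProduct, hDsj]
    rw [h1]
    have h2 : ∀ e, (D * S) e j = (D * S) j e := by
      intro e
      have := congrFun (congrFun hS3 j) e
      simpa [Matrix.transpose_apply] using this
    have h3 : ∑ e, (D * S) e j * (D * S) e j = ((D * S) * (D * S)) j j := by
      rw [Matrix.mul_apply]
      exact Finset.sum_congr rfl fun e _ => by rw [← h2 e]
    rw [h3]
    have h4 : (D * S) * (D * S) = D * S := by
      rw [Matrix.mul_assoc D S (D * S), ← Matrix.mul_assoc S D S, hS2]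
    rw [h4]
  -- (DS)_{jj} ≤ √2 * t
  obtain ⟨a, b, hadj, h1, h2, h0⟩ := hD.1 j
  have hne : a ≠ b := hadj.ne
  have hDSjj : (D * S) j j = sj a - sj b := by
    rw [Matrix.mul_apply]
    have hsub : ({a, b} : Finset (Fin n)) ⊆ Finset.univ := Finset.subset_univ _
    have : ∑ k, D j k * S k j = ∑ k ∈ ({a, b} : Finset (Fin n)), D j k * S k j := by
      refine (Finset.sum_subset hsub ?_).symm
      intro k _ hk
      simp only [Finset.mem_insert, Finset.mem_singleton, not_or] at hk
      rw [h0 k hk.1 hk.2, zero_mul]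
    rw [this, Finset.sum_pair hne, h1, h2]
    simp [hsj]; ring
  have hpairle : sj a ^ 2 + sj b ^ 2 ≤ ∑ i, sj i ^ 2 := by
    have : ∑ k ∈ ({a, b} : Finset (Fin n)), sj k ^ 2 ≤ ∑ i, sj i ^ 2 :=
      Finset.sum_le_sum_of_subset_of_nonneg (Finset.subset_univ _)
        (fun i _ _ => sq_nonneg _)
    rwa [Finset.sum_pair hne] at this
  have hbound : sj a - sj b ≤ Real.sqrt 2 * t := by
    have hsq : (sj a - sj b) ^ 2 ≤ 2 * t ^ 2 := by
      have : (sj a - sj b) ^ 2 ≤ 2 * (sj a ^ 2 + sj b ^ 2) := by nlinarith [sq_nonneg (sj a + sj b)]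
      calc (sj a - sj b) ^ 2 ≤ 2 * (sj a ^ 2 + sj b ^ 2) := this
        _ ≤ 2 * t ^ 2 := by rw [htsq]; linarith
    calc sj a - sj b ≤ |sj a - sj b| := le_abs_self _
      _ = Real.sqrt ((sj a - sj b) ^ 2) := (Real.sqrt_sq_eq_abs _).symm
      _ ≤ Real.sqrt (2 * t ^ 2) := Real.sqrt_le_sqrt hsq
      _ = Real.sqrt 2 * t := by
          rw [Real.sqrt_mul (by norm_num : (0:ℝ) ≤ 2), Real.sqrt_sq ht0]
  -- combine
  have hkey : c₁ * t ^ 2 ≤ Real.sqrt 2 * t := by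
    calc c₁ * t ^ 2 = c₁ * ∑ i, sj i ^ 2 := by rw [htsq]
      _ ≤ sj ⬝ᵥ (Dᵀ * D).mulVec sj := hgap'
      _ = (D * S) j j := hquad
      _ = sj a - sj b := hDSjj
      _ ≤ Real.sqrt 2 * t := hbound
  rcases eq_or_lt_of_le ht0 with h | h
  · rw [← h]
    positivity
  · rw [le_div_iff₀ hc₁]
    have hmul : (t * c₁) * t ≤ Real.sqrt 2 * t := by nlinarith
    exact le_of_mul_le_mul_right hmul h
end
end
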